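/- Let T be a Wang set and t ∈ T a tile with west color u and east color v. Say a color c reaches a color c' in T if there is a finite nonempty sequence t₁,…,t_k of tiles of T with w(t₁) = c, e(t_k) = c', and e(t_i) = w(t_{i+1}) for 1 ≤ i < k. If v does not reach u in T, then T is not minimally aperiodic; indeed, if T tiles the plane then T ∖ {t} tiles the plane. -/
import Mathlib


structure WangTile (H V : Type*) where
  west : H
  east : H
  south : V
  north : V
deriving DecidableEq

def TilingOn {H V : Type*} (T : Set (WangTile H V)) (X : Set (ℤ × ℤ))
    (f : ℤ × ℤ → WangTile H V) : Prop :=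
  (∀ p ∈ X, f p ∈ T) ∧
  (∀ x y : ℤ, (x, y) ∈ X → (x + 1, y) ∈ X →
    (f (x, y)).east = (f (x + 1, y)).west) ∧
  (∀ x y : ℤ, (x, y) ∈ X → (x, y + 1) ∈ X →
    (f (x, y)).north = (f (x, y + 1)).south)

def Tiling {H V : Type*} (T : Set (WangTile H V)) (f : ℤ × ℤ → WangTile H V) : Prop :=
  TilingOn T Set.univ f

def TilesPlane {H V : Type*} (T : Set (WangTile H V)) : Prop :=
  ∃ f, Tiling T f

def PeriodicTiling {H V : Type*} (f : ℤ × ℤ → WangTile H V) : Prop :=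
  ∃ u v : ℤ, (u, v) ≠ (0, 0) ∧ ∀ x y : ℤ, f (x + u, y + v) = f (x, y)

def Aperiodic {H V : Type*} (T : Set (WangTile H V)) : Prop :=
  TilesPlane T ∧ ∀ f, Tiling T f → ¬ PeriodicTiling f

def MinimallyAperiodic {H V : Type*} (T : Set (WangTile H V)) : Prop :=
  Aperiodic T ∧ ∀ S : Set (WangTile H V), S ⊂ T → ¬ TilesPlane S

/-- One horizontal step in the underlying graph of a Wang set: there is a tile of `T`
with west color `c` and east color `c'`. -/
def HStep {H V : Type*} (T : Set (WangTile H V)) (c c' : H) : Prop :=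
  ∃ t ∈ T, t.west = c ∧ t.east = c'

lemma tiling_chain {H V : Type*} {T : Set (WangTile H V)} {f : ℤ × ℤ → WangTile H V}
    (hf : Tiling T f) (x y : ℤ) :
    ∀ k : ℕ, Relation.TransGen (HStep T) (f (x, y)).east (f (x + 1 + (k : ℤ), y)).east := by
  intro k
  induction k with
  | zero =>
      apply Relation.TransGen.single
      refine ⟨f (x + 1 + (0:ℕ), y), hf.1 _ trivial, ?_, rfl⟩
      have := hf.2.1 x y trivial trivial
      simpa using this.symm
  | succ k ih =>
      apply ih.tail
      refine ⟨f (x + 1 + ((k:ℕ)+1 : ℕ), y), hf.1 _ trivial, ?_, rfl⟩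
      have := hf.2.1 (x + 1 + (k:ℤ)) y trivial trivial
      have e : x + 1 + (((k:ℕ)+1 : ℕ) : ℤ) = x + 1 + (k:ℤ) + 1 := by push_cast; ring
      rw [e]
      exact this.symm

lemma once_per_row {H V : Type*} {T : Set (WangTile H V)} {f : ℤ × ℤ → WangTile H V}
    (hf : Tiling T f) {t : WangTile H V} {x x' y : ℤ}
    (hx : f (x, y) = t) (hx' : f (x', y) = t) (hlt : x < x') :
    Relation.TransGen (HStep T) t.east t.west := by
  have htT : t ∈ T := hx ▸ hf.1 (x, y) trivial
  rcases eq_or_lt_of_le (by omega : x + 1 ≤ x') with h | h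
  · have hm := hf.2.1 x y trivial trivial
    rw [hx, h, hx'] at hm
    -- hm : t.east = t.west
    exact Relation.TransGen.single ⟨t, htT, hm.symm, hm⟩
  · set k : ℕ := (x' - x - 2).toNat with hk
    have hkz : (k : ℤ) = x' - x - 2 := by omega
    have hchain := tiling_chain hf x y k
    rw [hx] at hchain
    have e1 : x + 1 + (k : ℤ) = x' - 1 := by omega
    rw [e1] at hchain
    have hm := hf.2.1 (x' - 1) y trivial trivial
    have e2 : x' - 1 + 1 = x' := by ring
    rw [e2, hx'] at hm
    rw [hm] at hchain
    exact hchain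


theorem main_step {H V : Type*} (T : Set (WangTile H V))
    (hT : T.Finite) (t : WangTile H V) (ht : t ∈ T)
    (hreach : ¬ Relation.TransGen (HStep T) t.east t.west) :
    TilesPlane T → TilesPlane (T \ {t}) := by
  rintro ⟨f, hf⟩
  -- for each n, find a shift avoiding t on the square of radius n
  have hshift : ∀ n : ℕ, ∃ a : ℤ, ∀ x y : ℤ, x.natAbs ≤ n → y.natAbs ≤ n →
      f (x + a, y) ≠ t := by
    intro n
    have hsub : ∀ y : ℤ, {x : ℤ | f (x, y) = t}.Subsingleton := by
      intro y x hx x' hx'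
      by_contra hne
      rcases lt_or_gt_of_ne hne with h | h
      · exact hreach (once_per_row hf hx hx' h)
      · exact hreach (once_per_row hf hx' hx h)
    have hB : (⋃ y ∈ Set.Icc (-(n:ℤ)) (n:ℤ), {x : ℤ | f (x, y) = t}).Finite :=
      Set.Finite.biUnion (Set.finite_Icc _ _) fun y _ => (hsub y).finite
    obtain ⟨m, hm⟩ := hB.bddAbove
    refine ⟨m + n + 1, ?_⟩
    intro x y hx hy hft
    have hyI : y ∈ Set.Icc (-(n:ℤ)) (n:ℤ) := by
      simp only [Set.mem_Icc]; omega
    have hxB : x + (m + n + 1) ∈ ⋃ y ∈ Set.Icc (-(n:ℤ)) (n:ℤ), {x : ℤ | f (x, y) = t} :=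
      Set.mem_biUnion hyI hft
    have := hm hxB
    omega
  choose a ha using hshift
  set F : ℕ → ℤ × ℤ → WangTile H V := fun n p => f (p.1 + a n, p.2) with hF
  set u : Ultrafilter ℕ := Ultrafilter.of Filter.atTop with hu
  have hle : ∀ s : Set ℕ, s ∈ (Filter.atTop : Filter ℕ) → s ∈ u :=
    fun s hs => Ultrafilter.of_le Filter.atTop hs
  have hFT : ∀ n p, F n p ∈ T := fun n p => hf.1 _ trivial
  have key : ∀ p : ℤ × ℤ, ∃ w ∈ T, {n | F n p = w} ∈ u := by
    intro p
    have huniv : (⋃ w ∈ T, {n | F n p = w}) = Set.univ := by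
      ext n
      simp only [Set.mem_iUnion, Set.mem_setOf_eq, Set.mem_univ, iff_true]
      exact ⟨F n p, hFT n p, rfl⟩
    have : (⋃ w ∈ T, {n | F n p = w}) ∈ u := by rw [huniv]; exact Filter.univ_mem
    exact (Ultrafilter.finite_biUnion_mem_iff hT).mp this
  choose g hgT hgu using key
  refine ⟨g, ?_, ?_, ?_⟩
  · intro p _
    refine ⟨hgT p, ?_⟩
    have h2 : {n : ℕ | p.1.natAbs ≤ n ∧ p.2.natAbs ≤ n} ∈ u := by
      apply hle
      filter_upwards [Filter.mem_atTop (max p.1.natAbs p.2.natAbs)] with n hn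
      exact ⟨le_trans (le_max_left _ _) hn, le_trans (le_max_right _ _) hn⟩
    obtain ⟨n, hn1, hn2⟩ := Filter.nonempty_of_mem (Filter.inter_mem (hgu p) h2)
    simp only [Set.mem_setOf_eq] at hn1 hn2
    intro hgt
    rw [Set.mem_singleton_iff] at hgt
    exact ha n p.1 p.2 hn2.1 hn2.2 (hn1.trans hgt)
  · intro x y _ _
    obtain ⟨n, hn1, hn2⟩ :=
      Filter.nonempty_of_mem (Filter.inter_mem (hgu (x, y)) (hgu (x + 1, y)))
    simp only [Set.mem_setOf_eq] at hn1 hn2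
    rw [← hn1, ← hn2]
    have e : x + 1 + a n = (x + a n) + 1 := by ring
    show (f (x + a n, y)).east = (f (x + 1 + a n, y)).west
    rw [e]
    exact hf.2.1 (x + a n) y trivial trivial
  · intro x y _ _
    obtain ⟨n, hn1, hn2⟩ :=
      Filter.nonempty_of_mem (Filter.inter_mem (hgu (x, y)) (hgu (x, y + 1)))
    simp only [Set.mem_setOf_eq] at hn1 hn2
    rw [← hn1, ← hn2]
    exact hf.2.2 (x + a n) y trivial trivial

/-- if the east color of a tile `t ∈ T` does not reach (by a finite nonempty
chain of tiles of `T`) the west color of `t`, then `T` is not minimally aperiodic;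
indeed, if `T` tiles the plane then `T \ {t}` tiles the plane. -/
theorem not_minimallyAperiodic_of_not_reach {H V : Type*} (T : Set (WangTile H V))
    (hT : T.Finite) (t : WangTile H V) (ht : t ∈ T)
    (hreach : ¬ Relation.TransGen (HStep T) t.east t.west) :
    ¬ MinimallyAperiodic T ∧ (TilesPlane T → TilesPlane (T \ {t})) := by
  have main := main_step T hT t ht hreach
  refine ⟨?_, main⟩
  rintro ⟨⟨hTP, _⟩, hmin⟩
  exact hmin (T \ {t}) (Set.sdiff_singleton_ssubset.mpr ht) (main hTP)
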